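/- arXiv:1507.05014 — 3 statements merged into one kernel-verified Lean document; each statement's English description precedes it below -/
import Mathlib

section
/- Let Σ_i = (A_i,B_i,C_i,D_i), i ∈ {1,2}, be linear control systems with the same internal input dimension p and the same output dimension q, let A₁₂, B₁₂, C₁₂, D₁₂ be the associated auxiliary matrices, and let R = {(x₁;x₂) ∈ ℝ^{n₁}×ℝ^{n₂} : Px₁ = x₂} for a matrix P ∈ ℝ^{n₂×n₁}. Then R induces a simulation function from Σ₁ to Σ₂ — i.e., (a) R is (A₁₂,B₁₂)-externally stabilizable, (b) A₁₂R ⊆ R + im B₁₂, (c) im D₁₂ ⊆ R + im B₁₂, and (d) R ⊆ ker C₁₂ — if and only if there exist matrices K₁, K₂, K₃ of appropriate dimensions such that A₂ + B₂K₁ is Hurwitz, A₂P = PA₁ + B₂K₂, D₂ = PD₁ + B₂K₃, and C₁ = C₂P. -/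
open Matrix

noncomputable section

abbrev Euc (k : ℕ) := EuclideanSpace ℝ (Fin k)

/-- A real polynomial is Hurwitz if all of its complex roots have negative real part. -/
def PolyHurwitz (p : Polynomial ℝ) : Prop :=
  ∀ z : ℂ, (p.map (algebraMap ℝ ℂ)).IsRoot z → z.re < 0

/-- A real square matrix is Hurwitz if all of its complex eigenvalues (roots of the
characteristic polynomial) have strictly negative real part. -/
def Matrix.IsHurwitz {k : ℕ} (A : Matrix (Fin k) (Fin k) ℝ) : Prop :=
  PolyHurwitz A.charpoly

/-- A subspace `S` is `(A,B)`-externally stabilizable: there is a feedback `K` such that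
`(A + B∘K) S ⊆ S` and the induced map on the quotient space is Hurwitz (all complex roots
of its characteristic polynomial have negative real part). -/
def ExtStabilizable {E U : Type*} [AddCommGroup E] [Module ℝ E]
    [Module.Finite ℝ E] [AddCommGroup U] [Module ℝ U]
    (A : E →ₗ[ℝ] E) (B : U →ₗ[ℝ] E) (S : Submodule ℝ E) : Prop :=
  ∃ K : E →ₗ[ℝ] U, ∃ hinv : S ≤ S.comap (A + B ∘ₗ K),
    PolyHurwitz (Submodule.mapQ S S (A + B ∘ₗ K) hinv).charpoly

/-- The block-diagonal map `A₁₂ = diag(A₁,A₂)` acting on `ℝ^{n₁} × ℝ^{n₂}`. -/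
def A12L {n₁ n₂ : ℕ} (A₁ : Matrix (Fin n₁) (Fin n₁) ℝ) (A₂ : Matrix (Fin n₂) (Fin n₂) ℝ) :
    Euc n₁ × Euc n₂ →ₗ[ℝ] Euc n₁ × Euc n₂ :=
  (Matrix.toEuclideanLin A₁).prodMap (Matrix.toEuclideanLin A₂)

/-- The block map `B₁₂ = [0; B₂] : ℝ^{m₂} → ℝ^{n₁} × ℝ^{n₂}`. -/
def B12L (n₁ : ℕ) {n₂ m₂ : ℕ} (B₂ : Matrix (Fin n₂) (Fin m₂) ℝ) :
    Euc m₂ →ₗ[ℝ] Euc n₁ × Euc n₂ :=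
  LinearMap.prod 0 (Matrix.toEuclideanLin B₂)

/-- The block map `B₂₁ = [B₁; 0] : ℝ^{m₁} → ℝ^{n₁} × ℝ^{n₂}`. -/
def B21L (n₂ : ℕ) {n₁ m₁ : ℕ} (B₁ : Matrix (Fin n₁) (Fin m₁) ℝ) :
    Euc m₁ →ₗ[ℝ] Euc n₁ × Euc n₂ :=
  LinearMap.prod (Matrix.toEuclideanLin B₁) 0

/-- The block map `D₁₂ = [D₁; D₂] : ℝ^{p} → ℝ^{n₁} × ℝ^{n₂}`. -/
def D12L {n₁ n₂ p : ℕ} (D₁ : Matrix (Fin n₁) (Fin p) ℝ) (D₂ : Matrix (Fin n₂) (Fin p) ℝ) :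
    Euc p →ₗ[ℝ] Euc n₁ × Euc n₂ :=
  LinearMap.prod (Matrix.toEuclideanLin D₁) (Matrix.toEuclideanLin D₂)

/-- The block map `C₁₂ = [−C₁  C₂] : ℝ^{n₁} × ℝ^{n₂} → ℝ^{q}`. -/
def C12L {n₁ n₂ q : ℕ} (C₁ : Matrix (Fin q) (Fin n₁) ℝ) (C₂ : Matrix (Fin q) (Fin n₂) ℝ) :
    Euc n₁ × Euc n₂ →ₗ[ℝ] Euc q :=
  (Matrix.toEuclideanLin C₂) ∘ₗ (LinearMap.snd ℝ (Euc n₁) (Euc n₂)) -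
    (Matrix.toEuclideanLin C₁) ∘ₗ (LinearMap.fst ℝ (Euc n₁) (Euc n₂))

/-- A subspace `R ⊆ ℝ^{n₁} × ℝ^{n₂}` induces a simulation function from
`Σ₁ = (A₁,B₁,C₁,D₁)` to `Σ₂ = (A₂,B₂,C₂,D₂)` if
(a) `R` is `(A₁₂,B₁₂)`-externally stabilizable, (b) `A₁₂ R ⊆ R + im B₁₂`,
(c) `im D₁₂ ⊆ R + im B₁₂`, and (d) `R ⊆ ker C₁₂`. -/
def InducesSimFun {n₁ n₂ m₁ m₂ p q : ℕ}
    (A₁ : Matrix (Fin n₁) (Fin n₁) ℝ) (B₁ : Matrix (Fin n₁) (Fin m₁) ℝ)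
    (C₁ : Matrix (Fin q) (Fin n₁) ℝ) (D₁ : Matrix (Fin n₁) (Fin p) ℝ)
    (A₂ : Matrix (Fin n₂) (Fin n₂) ℝ) (B₂ : Matrix (Fin n₂) (Fin m₂) ℝ)
    (C₂ : Matrix (Fin q) (Fin n₂) ℝ) (D₂ : Matrix (Fin n₂) (Fin p) ℝ)
    (R : Submodule ℝ (Euc n₁ × Euc n₂)) : Prop :=
  ExtStabilizable (A12L A₁ A₂) (B12L n₁ B₂) R ∧
  R.map (A12L A₁ A₂) ≤ R ⊔ LinearMap.range (B12L n₁ B₂) ∧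
  LinearMap.range (D12L D₁ D₂) ≤ R ⊔ LinearMap.range (B12L n₁ B₂) ∧
  R ≤ LinearMap.ker (C12L C₁ C₂)

/-- The graph subspace `R = {(x₁,x₂) : P x₁ = x₂}`. -/
def graphSub {n₁ n₂ : ℕ} (P : Matrix (Fin n₂) (Fin n₁) ℝ) :
    Submodule ℝ (Euc n₁ × Euc n₂) :=
  LinearMap.ker ((Matrix.toEuclideanLin P) ∘ₗ (LinearMap.fst ℝ (Euc n₁) (Euc n₂)) -
    LinearMap.snd ℝ (Euc n₁) (Euc n₂))

/-! ### Auxiliary lemmas -/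

lemma toEucLin_mul {a b c : ℕ} (M : Matrix (Fin a) (Fin b) ℝ) (N : Matrix (Fin b) (Fin c) ℝ) :
    Matrix.toEuclideanLin (M * N) = (Matrix.toEuclideanLin M) ∘ₗ (Matrix.toEuclideanLin N) := by
  rw [Matrix.toEuclideanLin_eq_toLin, Matrix.toEuclideanLin_eq_toLin,
    Matrix.toEuclideanLin_eq_toLin]
  exact Matrix.toLin_mul _ _ _ M N

lemma charpoly_toEucLin {k : ℕ} (M : Matrix (Fin k) (Fin k) ℝ) :
    (Matrix.toEuclideanLin M).charpoly = M.charpoly := by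
  rw [Matrix.toEuclideanLin_eq_toLin]
  conv_rhs => rw [← LinearMap.toMatrix_toLin (PiLp.basisFun 2 ℝ (Fin k))
    (PiLp.basisFun 2 ℝ (Fin k)) M]
  rw [LinearMap.charpoly_toMatrix]

lemma exists_matrix_factor {n m k : ℕ} (B : Matrix (Fin k) (Fin m) ℝ) (M : Matrix (Fin k) (Fin n) ℝ)
    (h : ∀ x : Euc n, Matrix.toEuclideanLin M x ∈ LinearMap.range (Matrix.toEuclideanLin B)) :
    ∃ K : Matrix (Fin m) (Fin n) ℝ, M = B * K := by
  obtain ⟨h', hh'⟩ := Module.projective_lifting_property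
    (Matrix.toEuclideanLin B).rangeRestrict
    ((Matrix.toEuclideanLin M).codRestrict (LinearMap.range (Matrix.toEuclideanLin B)) h)
    (LinearMap.surjective_rangeRestrict _)
  refine ⟨Matrix.toEuclideanLin.symm h', ?_⟩
  apply Matrix.toEuclideanLin.injective
  rw [toEucLin_mul, LinearEquiv.apply_symm_apply]
  ext x
  have h2 : (Matrix.toEuclideanLin B) (h' x) = (Matrix.toEuclideanLin M) x := by
    simpa using congrArg Subtype.val (LinearMap.congr_fun hh' x)
  exact congrFun (congrArg WithLp.ofLp h2.symm) _

lemma charpoly_mapQ_of_comm {E : Type*} [AddCommGroup E] [Module ℝ E] [Module.Finite ℝ E]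
    {k : ℕ} (q : E →ₗ[ℝ] Euc k) (hq : Function.Surjective q)
    (f : E →ₗ[ℝ] E) (m : Euc k →ₗ[ℝ] Euc k)
    (hcomm : q ∘ₗ f = m ∘ₗ q) (hinv : LinearMap.ker q ≤ (LinearMap.ker q).comap f) :
    (Submodule.mapQ (LinearMap.ker q) (LinearMap.ker q) f hinv).charpoly = m.charpoly := by
  set S := LinearMap.ker q with hS
  let eb : (E ⧸ S) →ₗ[ℝ] Euc k := S.liftQ q le_rfl
  have hinj : Function.Injective eb := by
    rw [← LinearMap.ker_eq_bot]
    exact Submodule.ker_liftQ_eq_bot _ _ _ le_rfl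
  have hsurj : Function.Surjective eb := by
    intro y
    obtain ⟨x, hx⟩ := hq y
    exact ⟨Submodule.Quotient.mk x, hx⟩
  let e : (E ⧸ S) ≃ₗ[ℝ] Euc k := LinearEquiv.ofBijective eb ⟨hinj, hsurj⟩
  have h1 : eb ∘ₗ Submodule.mapQ S S f hinv = m ∘ₗ eb := by
    apply Submodule.linearMap_qext
    apply LinearMap.ext
    intro x
    simp only [LinearMap.comp_apply, Submodule.mkQ_apply, Submodule.mapQ_apply,
      Submodule.liftQ_apply]
    exact LinearMap.congr_fun hcomm x
  have hcomm2 : e.conj (Submodule.mapQ S S f hinv) = m := by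
    apply LinearMap.ext
    intro y
    rw [LinearEquiv.conj_apply]
    have h2 : eb (Submodule.mapQ S S f hinv (e.symm y)) = m (eb (e.symm y)) :=
      LinearMap.congr_fun h1 (e.symm y)
    simp only [LinearMap.comp_apply]
    show eb ((Submodule.mapQ S S f hinv) (e.symm y)) = m y
    rw [h2]
    exact congrArg m (e.apply_symm_apply y)
  rw [← hcomm2, LinearEquiv.charpoly_conj]

/-- The "quotient" map whose kernel is `graphSub P`. -/
def qmap {n₁ n₂ : ℕ} (P : Matrix (Fin n₂) (Fin n₁) ℝ) : Euc n₁ × Euc n₂ →ₗ[ℝ] Euc n₂ :=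
  (Matrix.toEuclideanLin P) ∘ₗ (LinearMap.fst ℝ (Euc n₁) (Euc n₂)) -
    LinearMap.snd ℝ (Euc n₁) (Euc n₂)

lemma graphSub_eq {n₁ n₂ : ℕ} (P : Matrix (Fin n₂) (Fin n₁) ℝ) :
    graphSub P = LinearMap.ker (qmap P) := rfl

lemma qmap_apply {n₁ n₂ : ℕ} (P : Matrix (Fin n₂) (Fin n₁) ℝ) (v : Euc n₁ × Euc n₂) :
    qmap P v = Matrix.toEuclideanLin P v.1 - v.2 := rfl

lemma qmap_surjective {n₁ n₂ : ℕ} (P : Matrix (Fin n₂) (Fin n₁) ℝ) :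
    Function.Surjective (qmap P) := by
  intro y
  refine ⟨(0, -y), ?_⟩
  simp [qmap_apply]

lemma mem_graphSub {n₁ n₂ : ℕ} (P : Matrix (Fin n₂) (Fin n₁) ℝ) (v : Euc n₁ × Euc n₂) :
    v ∈ graphSub P ↔ Matrix.toEuclideanLin P v.1 = v.2 := by
  rw [graphSub_eq, LinearMap.mem_ker, qmap_apply, sub_eq_zero]

lemma B12L_apply {n₁ n₂ m₂ : ℕ} (B₂ : Matrix (Fin n₂) (Fin m₂) ℝ) (u : Euc m₂) :
    B12L n₁ B₂ u = (0, Matrix.toEuclideanLin B₂ u) := rfl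

lemma A12L_apply {n₁ n₂ : ℕ} (A₁ : Matrix (Fin n₁) (Fin n₁) ℝ) (A₂ : Matrix (Fin n₂) (Fin n₂) ℝ)
    (v : Euc n₁ × Euc n₂) :
    A12L A₁ A₂ v = (Matrix.toEuclideanLin A₁ v.1, Matrix.toEuclideanLin A₂ v.2) := rfl

lemma mem_graph_sup {n₁ n₂ m₂ : ℕ} (P : Matrix (Fin n₂) (Fin n₁) ℝ)
    (B₂ : Matrix (Fin n₂) (Fin m₂) ℝ) (v : Euc n₁ × Euc n₂) :
    v ∈ graphSub P ⊔ LinearMap.range (B12L n₁ B₂) ↔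
      ∃ u : Euc m₂, v.2 = Matrix.toEuclideanLin P v.1 + Matrix.toEuclideanLin B₂ u := by
  rw [Submodule.mem_sup]
  constructor
  · rintro ⟨r, hr, w, ⟨u, rfl⟩, rfl⟩
    rw [mem_graphSub] at hr
    refine ⟨u, ?_⟩
    rw [B12L_apply]
    simp [← hr]
  · rintro ⟨u, hu⟩
    refine ⟨(v.1, Matrix.toEuclideanLin P v.1), (mem_graphSub _ _).2 rfl,
      B12L n₁ B₂ u, ⟨u, rfl⟩, ?_⟩
    rw [B12L_apply, Prod.ext_iff]
    exact ⟨by simp, by simp [hu.symm]⟩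

/-- Condition (b) characterization. -/
lemma condB_iff {n₁ n₂ m₂ : ℕ} (P : Matrix (Fin n₂) (Fin n₁) ℝ)
    (A₁ : Matrix (Fin n₁) (Fin n₁) ℝ) (A₂ : Matrix (Fin n₂) (Fin n₂) ℝ)
    (B₂ : Matrix (Fin n₂) (Fin m₂) ℝ) :
    (graphSub P).map (A12L A₁ A₂) ≤ graphSub P ⊔ LinearMap.range (B12L n₁ B₂) ↔
      ∃ K₂ : Matrix (Fin m₂) (Fin n₁) ℝ, A₂ * P = P * A₁ + B₂ * K₂ := by
  constructor
  · intro h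
    have hmem : ∀ x : Euc n₁, Matrix.toEuclideanLin (A₂ * P - P * A₁) x ∈
        LinearMap.range (Matrix.toEuclideanLin B₂) := by
      intro x
      have hx : (x, Matrix.toEuclideanLin P x) ∈ graphSub P := (mem_graphSub _ _).2 rfl
      have := h (Submodule.mem_map_of_mem hx)
      rw [A12L_apply, mem_graph_sup] at this
      obtain ⟨u, hu⟩ := this
      refine ⟨u, ?_⟩
      rw [map_sub, toEucLin_mul, toEucLin_mul]
      simp only [LinearMap.sub_apply, LinearMap.comp_apply]
      rw [eq_sub_iff_add_eq, eq_comm, add_comm]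
      exact hu
    obtain ⟨K₂, hK₂⟩ := exists_matrix_factor B₂ (A₂ * P - P * A₁) hmem
    exact ⟨K₂, sub_eq_iff_eq_add'.mp hK₂⟩
  · rintro ⟨K₂, hK₂⟩
    rintro _ ⟨v, hv, rfl⟩
    replace hv := (mem_graphSub P v).1 hv
    rw [A12L_apply, mem_graph_sup]
    refine ⟨Matrix.toEuclideanLin K₂ v.1, ?_⟩
    have := LinearMap.congr_fun (congrArg Matrix.toEuclideanLin hK₂) v.1
    rw [map_add, toEucLin_mul, toEucLin_mul, toEucLin_mul] at this
    simp only [LinearMap.add_apply, LinearMap.comp_apply] at this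
    rw [← hv]
    exact this

/-- Condition (c) characterization. -/
lemma condC_iff {n₁ n₂ m₂ p : ℕ} (P : Matrix (Fin n₂) (Fin n₁) ℝ)
    (D₁ : Matrix (Fin n₁) (Fin p) ℝ) (D₂ : Matrix (Fin n₂) (Fin p) ℝ)
    (B₂ : Matrix (Fin n₂) (Fin m₂) ℝ) :
    LinearMap.range (D12L D₁ D₂) ≤ graphSub P ⊔ LinearMap.range (B12L n₁ B₂) ↔
      ∃ K₃ : Matrix (Fin m₂) (Fin p) ℝ, D₂ = P * D₁ + B₂ * K₃ := by
  constructor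
  · intro h
    have hmem : ∀ w : Euc p, Matrix.toEuclideanLin (D₂ - P * D₁) w ∈
        LinearMap.range (Matrix.toEuclideanLin B₂) := by
      intro w
      have := h ⟨w, rfl⟩
      rw [mem_graph_sup] at this
      obtain ⟨u, hu⟩ := this
      refine ⟨u, ?_⟩
      rw [map_sub, toEucLin_mul]
      simp only [LinearMap.sub_apply, LinearMap.comp_apply]
      rw [eq_sub_iff_add_eq, eq_comm, add_comm]
      exact hu
    obtain ⟨K₃, hK₃⟩ := exists_matrix_factor B₂ (D₂ - P * D₁) hmem
    exact ⟨K₃, sub_eq_iff_eq_add'.mp hK₃⟩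
  · rintro ⟨K₃, hK₃⟩
    rintro _ ⟨w, rfl⟩
    rw [mem_graph_sup]
    refine ⟨Matrix.toEuclideanLin K₃ w, ?_⟩
    have := LinearMap.congr_fun (congrArg Matrix.toEuclideanLin hK₃) w
    rw [map_add, toEucLin_mul, toEucLin_mul] at this
    simp only [LinearMap.add_apply, LinearMap.comp_apply] at this
    exact this

/-- Condition (d) characterization. -/
lemma condD_iff {n₁ n₂ q : ℕ} (P : Matrix (Fin n₂) (Fin n₁) ℝ)
    (C₁ : Matrix (Fin q) (Fin n₁) ℝ) (C₂ : Matrix (Fin q) (Fin n₂) ℝ) :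
    graphSub P ≤ LinearMap.ker (C12L C₁ C₂) ↔ C₁ = C₂ * P := by
  constructor
  · intro h
    apply Matrix.toEuclideanLin.injective
    apply LinearMap.ext
    intro x
    have hx : (x, Matrix.toEuclideanLin P x) ∈ graphSub P := (mem_graphSub _ _).2 rfl
    have := h hx
    rw [LinearMap.mem_ker] at this
    simp only [C12L, LinearMap.sub_apply, LinearMap.comp_apply, LinearMap.snd_apply,
      LinearMap.fst_apply, sub_eq_zero] at this
    rw [toEucLin_mul]
    exact this.symm
  · intro h
    intro v hv
    rw [mem_graphSub] at hv
    rw [LinearMap.mem_ker]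
    simp only [C12L, LinearMap.sub_apply, LinearMap.comp_apply, LinearMap.snd_apply,
      LinearMap.fst_apply, sub_eq_zero]
    have := LinearMap.congr_fun (congrArg Matrix.toEuclideanLin h) v.1
    rw [toEucLin_mul] at this
    simp only [LinearMap.comp_apply] at this
    rw [← hv]
    exact this.symm

lemma charpoly_mapQ_of_comm' {E : Type*} [AddCommGroup E] [Module ℝ E] [Module.Finite ℝ E]
    {k : ℕ} (q : E →ₗ[ℝ] Euc k) (hq : Function.Surjective q)
    (f : E →ₗ[ℝ] E) (m : Euc k →ₗ[ℝ] Euc k)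
    (hcomm : q ∘ₗ f = m ∘ₗ q) (S : Submodule ℝ E) (hS : S = LinearMap.ker q)
    (hinv : S ≤ S.comap f) :
    (Submodule.mapQ S S f hinv).charpoly = m.charpoly := by
  subst hS
  exact charpoly_mapQ_of_comm q hq f m hcomm hinv

lemma fK_apply {n₁ n₂ m₂ : ℕ} (A₁ : Matrix (Fin n₁) (Fin n₁) ℝ) (A₂ : Matrix (Fin n₂) (Fin n₂) ℝ)
    (B₂ : Matrix (Fin n₂) (Fin m₂) ℝ) (K : Euc n₁ × Euc n₂ →ₗ[ℝ] Euc m₂) (v : Euc n₁ × Euc n₂) :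
    (A12L A₁ A₂ + B12L n₁ B₂ ∘ₗ K) v =
      (Matrix.toEuclideanLin A₁ v.1,
        Matrix.toEuclideanLin A₂ v.2 + Matrix.toEuclideanLin B₂ (K v)) := by
  show A12L A₁ A₂ v + B12L n₁ B₂ (K v) = _
  rw [A12L_apply, B12L_apply, Prod.mk_add_mk, add_zero]

lemma qcomm {n₁ n₂ m₂ : ℕ} (P : Matrix (Fin n₂) (Fin n₁) ℝ)
    (A₁ : Matrix (Fin n₁) (Fin n₁) ℝ) (A₂ : Matrix (Fin n₂) (Fin n₂) ℝ)
    (B₂ : Matrix (Fin n₂) (Fin m₂) ℝ) (K : Euc n₁ × Euc n₂ →ₗ[ℝ] Euc m₂)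
    (hinv : graphSub P ≤ (graphSub P).comap (A12L A₁ A₂ + B12L n₁ B₂ ∘ₗ K)) :
    qmap P ∘ₗ (A12L A₁ A₂ + B12L n₁ B₂ ∘ₗ K) =
      (Matrix.toEuclideanLin A₂ + Matrix.toEuclideanLin B₂ ∘ₗ
        (K ∘ₗ LinearMap.inr ℝ (Euc n₁) (Euc n₂))) ∘ₗ qmap P := by
  apply LinearMap.ext
  rintro ⟨x₁, x₂⟩
  have hx : ((x₁, Matrix.toEuclideanLin P x₁) : Euc n₁ × Euc n₂) ∈ graphSub P :=
    (mem_graphSub _ _).2 rfl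
  have hz : Matrix.toEuclideanLin P (Matrix.toEuclideanLin A₁ x₁) =
      Matrix.toEuclideanLin A₂ (Matrix.toEuclideanLin P x₁) +
        Matrix.toEuclideanLin B₂ (K (x₁, Matrix.toEuclideanLin P x₁)) := by
    have := hinv hx
    rw [Submodule.mem_comap, fK_apply, mem_graphSub] at this
    exact this
  simp only [LinearMap.comp_apply]
  rw [fK_apply, qmap_apply, qmap_apply]
  simp only [LinearMap.add_apply, LinearMap.comp_apply, LinearMap.inr_apply]
  have hK : K (0, Matrix.toEuclideanLin P x₁ - x₂) =
      K (x₁, Matrix.toEuclideanLin P x₁) - K (x₁, x₂) := by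
    rw [← map_sub]
    congr 1
    rw [Prod.mk_sub_mk, sub_self]
  show Matrix.toEuclideanLin P (Matrix.toEuclideanLin A₁ x₁) -
      (Matrix.toEuclideanLin A₂ x₂ + Matrix.toEuclideanLin B₂ (K (x₁, x₂))) = _
  rw [hK, hz, map_sub (Matrix.toEuclideanLin A₂), map_sub (Matrix.toEuclideanLin B₂)]
  abel

lemma extStab_forward {n₁ n₂ m₂ : ℕ} (P : Matrix (Fin n₂) (Fin n₁) ℝ)
    (A₁ : Matrix (Fin n₁) (Fin n₁) ℝ) (A₂ : Matrix (Fin n₂) (Fin n₂) ℝ)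
    (B₂ : Matrix (Fin n₂) (Fin m₂) ℝ)
    (h : ExtStabilizable (A12L A₁ A₂) (B12L n₁ B₂) (graphSub P)) :
    ∃ K₁ : Matrix (Fin m₂) (Fin n₂) ℝ, (A₂ + B₂ * K₁).IsHurwitz := by
  obtain ⟨K, hinv, hH⟩ := h
  refine ⟨Matrix.toEuclideanLin.symm (K ∘ₗ LinearMap.inr ℝ (Euc n₁) (Euc n₂)), ?_⟩
  have hm : Matrix.toEuclideanLin
        (A₂ + B₂ * Matrix.toEuclideanLin.symm (K ∘ₗ LinearMap.inr ℝ (Euc n₁) (Euc n₂))) =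
      Matrix.toEuclideanLin A₂ + Matrix.toEuclideanLin B₂ ∘ₗ
        (K ∘ₗ LinearMap.inr ℝ (Euc n₁) (Euc n₂)) := by
    rw [map_add, toEucLin_mul, LinearEquiv.apply_symm_apply]
  have hcp := charpoly_mapQ_of_comm' (qmap P) (qmap_surjective P) _ _
    (qcomm P A₁ A₂ B₂ K hinv) (graphSub P) (graphSub_eq P) hinv
  show PolyHurwitz _
  rw [← charpoly_toEucLin, hm, ← hcp]
  exact hH

lemma extStab_backward {n₁ n₂ m₂ : ℕ} (P : Matrix (Fin n₂) (Fin n₁) ℝ)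
    (A₁ : Matrix (Fin n₁) (Fin n₁) ℝ) (A₂ : Matrix (Fin n₂) (Fin n₂) ℝ)
    (B₂ : Matrix (Fin n₂) (Fin m₂) ℝ) (K₁ : Matrix (Fin m₂) (Fin n₂) ℝ)
    (K₂ : Matrix (Fin m₂) (Fin n₁) ℝ) (h1 : (A₂ + B₂ * K₁).IsHurwitz)
    (h2 : A₂ * P = P * A₁ + B₂ * K₂) :
    ExtStabilizable (A12L A₁ A₂) (B12L n₁ B₂) (graphSub P) := by
  set k₁ := Matrix.toEuclideanLin K₁ with hk₁
  set k₂ := Matrix.toEuclideanLin K₂ with hk₂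
  set K : Euc n₁ × Euc n₂ →ₗ[ℝ] Euc m₂ :=
    (-(k₁ ∘ₗ qmap P)) - k₂ ∘ₗ LinearMap.fst ℝ (Euc n₁) (Euc n₂) with hKdef
  have hKapp : ∀ v : Euc n₁ × Euc n₂,
      K v = k₁ (v.2 - Matrix.toEuclideanLin P v.1) - k₂ v.1 := by
    intro v
    show -(k₁ (qmap P v)) - k₂ v.1 = _
    rw [qmap_apply, ← map_neg, neg_sub]
  have h2' : ∀ x, Matrix.toEuclideanLin A₂ (Matrix.toEuclideanLin P x) =
      Matrix.toEuclideanLin P (Matrix.toEuclideanLin A₁ x) + Matrix.toEuclideanLin B₂ (k₂ x) := by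
    intro x
    have := LinearMap.congr_fun (congrArg Matrix.toEuclideanLin h2) x
    rw [map_add, toEucLin_mul, toEucLin_mul, toEucLin_mul] at this
    simpa using this
  have hinv : graphSub P ≤ (graphSub P).comap (A12L A₁ A₂ + B12L n₁ B₂ ∘ₗ K) := by
    intro v hv
    replace hv := (mem_graphSub P v).1 hv
    rw [Submodule.mem_comap, fK_apply, mem_graphSub]
    rw [hKapp, ← hv, sub_self, map_zero, zero_sub, map_neg, h2' v.1,
      add_neg_cancel_right]
  refine ⟨K, hinv, ?_⟩
  have hcp := charpoly_mapQ_of_comm' (qmap P) (qmap_surjective P) _ _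
    (qcomm P A₁ A₂ B₂ K hinv) (graphSub P) (graphSub_eq P) hinv
  have hKinr : K ∘ₗ LinearMap.inr ℝ (Euc n₁) (Euc n₂) = k₁ := by
    apply LinearMap.ext
    intro y
    rw [LinearMap.comp_apply, LinearMap.inr_apply, hKapp]
    simp
  rw [hcp, hKinr]
  have hm : Matrix.toEuclideanLin A₂ + Matrix.toEuclideanLin B₂ ∘ₗ k₁ =
      Matrix.toEuclideanLin (A₂ + B₂ * K₁) := by
    rw [map_add, toEucLin_mul, hk₁]
  rw [hm, charpoly_toEucLin]
  exact h1


/-- Theorem on geometric characterization for graph subspaces: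
the graph subspace `R = {(x₁,x₂) : Px₁ = x₂}` induces a simulation function from `Σ₁`
to `Σ₂` iff there exist matrices `K₁, K₂, K₃` such that `A₂ + B₂K₁` is Hurwitz,
`A₂P = PA₁ + B₂K₂`, `D₂ = PD₁ + B₂K₃` and `C₁ = C₂P`. -/
theorem graph_inducesSimFun_iff {n₁ n₂ m₁ m₂ p q : ℕ}
    (A₁ : Matrix (Fin n₁) (Fin n₁) ℝ) (B₁ : Matrix (Fin n₁) (Fin m₁) ℝ)
    (C₁ : Matrix (Fin q) (Fin n₁) ℝ) (D₁ : Matrix (Fin n₁) (Fin p) ℝ)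
    (A₂ : Matrix (Fin n₂) (Fin n₂) ℝ) (B₂ : Matrix (Fin n₂) (Fin m₂) ℝ)
    (C₂ : Matrix (Fin q) (Fin n₂) ℝ) (D₂ : Matrix (Fin n₂) (Fin p) ℝ)
    (P : Matrix (Fin n₂) (Fin n₁) ℝ) :
    InducesSimFun A₁ B₁ C₁ D₁ A₂ B₂ C₂ D₂ (graphSub P) ↔
      ∃ (K₁ : Matrix (Fin m₂) (Fin n₂) ℝ) (K₂ : Matrix (Fin m₂) (Fin n₁) ℝ)
        (K₃ : Matrix (Fin m₂) (Fin p) ℝ),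
        (A₂ + B₂ * K₁).IsHurwitz ∧
        A₂ * P = P * A₁ + B₂ * K₂ ∧
        D₂ = P * D₁ + B₂ * K₃ ∧
        C₁ = C₂ * P := by
  constructor
  · intro h
    obtain ⟨ha, hb, hc, hd⟩ := h
    obtain ⟨K₁, hK₁⟩ := extStab_forward P A₁ A₂ B₂ ha
    obtain ⟨K₂, hK₂⟩ := (condB_iff P A₁ A₂ B₂).mp hb
    obtain ⟨K₃, hK₃⟩ := (condC_iff P D₁ D₂ B₂).mp hc
    exact ⟨K₁, K₂, K₃, hK₁, hK₂, hK₃, (condD_iff P C₁ C₂).mp hd⟩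
  · rintro ⟨K₁, K₂, K₃, h1, h2, h3, h4⟩
    exact ⟨extStab_backward P A₁ A₂ B₂ K₁ K₂ h1 h2, (condB_iff P A₁ A₂ B₂).mpr ⟨K₂, h2⟩,
      (condC_iff P D₁ D₂ B₂).mpr ⟨K₃, h3⟩, (condD_iff P C₁ C₂).mpr h4⟩
end
end

section
/- Let Σ_i = (A_i,B_i,C_i,D_i), i ∈ {1,2}, be linear control systems with the same internal input dimension p and the same output dimension q, let B₁₂ = [0; B₂] and B₂₁ = [B₁; 0], and let R = {(x₁;x₂) ∈ ℝ^{n₁}×ℝ^{n₂} : Px₁ = x₂} for a matrix P ∈ ℝ^{n₂×n₁}. Then im B₂₁ ⊆ R + im B₁₂ if and only if there exists a matrix K₄ with PB₁ = B₂K₄. -/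
open Matrix

noncomputable section

/-- `im B₂₁ ⊆ R + im B₁₂` for the graph subspace `R = {(x₁,x₂) : Px₁ = x₂}`
iff there is a matrix `K₄` with `P B₁ = B₂ K₄`. -/
theorem range_B21_le_iff {n₁ n₂ m₁ m₂ p q : ℕ}
    (A₁ : Matrix (Fin n₁) (Fin n₁) ℝ) (B₁ : Matrix (Fin n₁) (Fin m₁) ℝ)
    (C₁ : Matrix (Fin q) (Fin n₁) ℝ) (D₁ : Matrix (Fin n₁) (Fin p) ℝ)
    (A₂ : Matrix (Fin n₂) (Fin n₂) ℝ) (B₂ : Matrix (Fin n₂) (Fin m₂) ℝ)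
    (C₂ : Matrix (Fin q) (Fin n₂) ℝ) (D₂ : Matrix (Fin n₂) (Fin p) ℝ)
    (P : Matrix (Fin n₂) (Fin n₁) ℝ) :
    LinearMap.range (B21L n₂ B₁) ≤ graphSub P ⊔ LinearMap.range (B12L n₁ B₂) ↔
      ∃ K₄ : Matrix (Fin m₂) (Fin m₁) ℝ, P * B₁ = B₂ * K₄ := by
  constructor
  · intro h
    have key : ∀ j : Fin m₁, ∃ v : Fin m₂ → ℝ,
        P *ᵥ (B₁ *ᵥ Pi.single j 1) = B₂ *ᵥ v := by
      intro j
      have hmem := h (LinearMap.mem_range_self (B21L n₂ B₁)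
        ((WithLp.equiv 2 (Fin m₁ → ℝ)).symm (Pi.single j 1)))
      rw [Submodule.mem_sup] at hmem
      obtain ⟨y, hy, z, ⟨v, rfl⟩, hyz⟩ := hmem
      refine ⟨-(WithLp.equiv 2 (Fin m₂ → ℝ)) v, ?_⟩
      have h1 : y.1 = Matrix.toEuclideanLin B₁ ((WithLp.equiv 2 (Fin m₁ → ℝ)).symm (Pi.single j 1)) := by
        have := congrArg Prod.fst hyz
        simpa [B21L, B12L] using this
      have h2 : y.2 + Matrix.toEuclideanLin B₂ v = 0 := by
        have := congrArg Prod.snd hyz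
        simpa [B21L, B12L] using this
      have hgy : Matrix.toEuclideanLin P y.1 = y.2 := by
        have := hy
        simp only [graphSub, LinearMap.mem_ker, LinearMap.sub_apply, LinearMap.comp_apply,
          LinearMap.fst_apply, LinearMap.snd_apply, sub_eq_zero] at this
        exact this
      have : Matrix.toEuclideanLin P (Matrix.toEuclideanLin B₁
          ((WithLp.equiv 2 (Fin m₁ → ℝ)).symm (Pi.single j 1))) =
          - Matrix.toEuclideanLin B₂ v := by
        rw [← h1, hgy]; exact eq_neg_of_add_eq_zero_left h2
      have := congrArg (WithLp.equiv 2 (Fin n₂ → ℝ)) this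
      simpa [Matrix.toEuclideanLin_apply, Matrix.mulVec_neg] using this
    choose v hv using key
    refine ⟨Matrix.of fun i j => v j i, ?_⟩
    ext i j
    have h1 : (P * B₁) i j = (P *ᵥ (B₁ *ᵥ Pi.single j 1)) i := by
      simp [Matrix.mul_apply, Matrix.mulVec, dotProduct, Pi.single_apply, mul_ite, Finset.sum_ite_eq']
    rw [h1, congrFun (hv j) i]
    simp [Matrix.mul_apply, Matrix.mulVec, dotProduct, Pi.single_apply, mul_ite, Finset.sum_ite_eq']
  · rintro ⟨K₄, hK⟩ x ⟨u, rfl⟩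
    rw [Submodule.mem_sup]
    refine ⟨(Matrix.toEuclideanLin B₁ u, Matrix.toEuclideanLin P (Matrix.toEuclideanLin B₁ u)), ?_,
      (0, - Matrix.toEuclideanLin P (Matrix.toEuclideanLin B₁ u)), ?_, ?_⟩
    · simp [graphSub]
    · refine ⟨-(Matrix.toEuclideanLin K₄ u), ?_⟩
      have hB : Matrix.toEuclideanLin B₂ (Matrix.toEuclideanLin K₄ u) =
          Matrix.toEuclideanLin P (Matrix.toEuclideanLin B₁ u) := by
        have := congrArg (fun M => Matrix.toEuclideanLin M u) hK.symm
        simpa [Matrix.toEuclideanLin_apply, Matrix.mulVec_mulVec] using this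
      simp [B12L, hB, Prod.ext_iff]
    · simp [B21L, B12L]
end
end

section
/- Consider the interconnected control system Σ = I(Σ_1,…,Σ_N) of N subsystems Σ_i together with abstractions Σ̂_i and simulation functions V_i from Σ̂_i to Σ_i whose comparison functions are all linear: α_i(r) = α_i·r, λ_i(r) = λ_i·r, ρ_i(r) = ρ_i·r and μ_i linear, and suppose the Ω-path is linear, σ_i(r) = η_i·r with η ∈ ℝ^N_{>0} satisfying D∘Γ∘Λ^{-1}(σ(r)) < σ(r) for all r > 0 with ε_i(r) = ε_i·r, ε_i > 0. Then V(x̂,x) = max_{i∈{1,…,N}} (λ_i/η_i)·V_i(x̂_i,x_i) is a simulation function from I(Σ̂_1,…,Σ̂_N) to Σ with linear comparison functions λ(r) = (min_i λ_i·ε_i/(1+ε_i))·r and ρ(r) = (max_i ρ_i·λ_i/η_i)·r. -/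
noncomputable section

/-- Upper-right Dini derivative of `V` at `x` in direction `v`. -/
def diniDeriv {E : Type*} [AddCommGroup E] [Module ℝ E] (V : E → ℝ) (x v : E) : ℝ :=
  Filter.limsup (fun t : ℝ => (V (x + t • v) - V x) / t) (nhdsWithin (0 : ℝ) (Set.Ioi 0))

/-- Class `K`: continuous, strictly increasing on `[0,∞)`, vanishing at `0`. -/
def ClassK (γ : ℝ → ℝ) : Prop :=
  ContinuousOn γ (Set.Ici 0) ∧ StrictMonoOn γ (Set.Ici 0) ∧ γ 0 = 0 ∧ ∀ r, 0 ≤ r → 0 ≤ γ r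

/-- Class `K∞`: class `K` and unbounded. -/
def ClassKInf (γ : ℝ → ℝ) : Prop := ClassK γ ∧ ∀ M : ℝ, ∃ r, 0 ≤ r ∧ M ≤ γ r

/-- Euclidean norm of a concatenated block vector. -/
def pnorm {ι : Type*} [Fintype ι] {d : ι → ℕ} (g : ∀ i, Euc (d i)) : ℝ :=
  Real.sqrt (∑ i, ‖g i‖ ^ 2)

open Filter Topology

section Aux

lemma limsup_junk {q : ℝ → ℝ} (h : ¬ Filter.IsBoundedUnder (· ≤ ·) (𝓝[>] (0:ℝ)) q) :
    Filter.limsup q (𝓝[>] (0:ℝ)) = 0 := by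
  rw [Filter.limsup_eq]
  have : { a | ∀ᶠ t in 𝓝[>] (0:ℝ), q t ≤ a } = ∅ := by
    rw [Set.eq_empty_iff_forall_notMem]
    intro a ha
    exact h ⟨a, by simpa [Filter.eventually_map] using ha⟩
  rw [this, Real.sInf_empty]

lemma limsup_le_finset_sup' {ι : Type*} (A : Finset ι) (hA : A.Nonempty)
    (q : ℝ → ℝ) (qi : ι → ℝ → ℝ) (b : ι → ℝ)
    (h1 : ∀ᶠ t in 𝓝[>] (0:ℝ), q t ≤ A.sup' hA (fun i => qi i t))
    (h2 : Filter.IsCoboundedUnder (· ≤ ·) (𝓝[>] (0:ℝ)) q)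
    (h3 : ∀ i ∈ A, ∀ ε > 0, ∀ᶠ t in 𝓝[>] (0:ℝ), qi i t ≤ b i + ε) :
    Filter.limsup q (𝓝[>] (0:ℝ)) ≤ A.sup' hA b := by
  apply le_of_forall_pos_le_add
  intro ε hε
  apply Filter.limsup_le_of_le h2
  have hall : ∀ᶠ t in 𝓝[>] (0:ℝ), ∀ i ∈ A, qi i t ≤ b i + ε :=
    (Filter.eventually_all_finset A).2 (fun i hi => h3 i hi ε hε)
  filter_upwards [h1, hall] with t h1t h2t
  calc q t ≤ A.sup' hA (fun i => qi i t) := h1t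
    _ ≤ A.sup' hA b + ε := by
        apply Finset.sup'_le
        intro i hi
        calc qi i t ≤ b i + ε := h2t i hi
          _ ≤ A.sup' hA b + ε := by gcongr; exact Finset.le_sup' _ hi

lemma exists_ciSup_eq {N : ℕ} [NeZero N] (f : Fin N → ℝ) :
    ∃ i, (⨆ j, f j) = f i ∧ ∀ j, f j ≤ f i := by
  have : Nonempty (Fin N) := Fin.pos_iff_nonempty.1 (Nat.pos_of_ne_zero (NeZero.ne N))
  obtain ⟨i, hi⟩ := Finite.exists_max f
  exact ⟨i, le_antisymm (ciSup_le hi) (le_ciSup (Set.Finite.bddAbove (Set.finite_range f)) i), hi⟩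

lemma pnorm_nonneg' {ι : Type*} [Fintype ι] {d : ι → ℕ} (g : ∀ i, Euc (d i)) :
    0 ≤ pnorm g := Real.sqrt_nonneg _

lemma norm_le_pnorm {ι : Type*} [Fintype ι] {d : ι → ℕ} (g : ∀ i, Euc (d i)) (i : ι) :
    ‖g i‖ ≤ pnorm g := by
  rw [pnorm, ← Real.sqrt_sq (norm_nonneg (g i))]
  exact Real.sqrt_le_sqrt
    (Finset.single_le_sum (f := fun j => ‖g j‖^2) (fun j _ => sq_nonneg _) (Finset.mem_univ i))

lemma pnorm_le_of_norm_le {ι : Type*} [Fintype ι] {d : ι → ℕ} (g : ∀ i, Euc (d i))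
    {C : ℝ} (hC : 0 ≤ C) (h : ∀ i, ‖g i‖ ≤ C) :
    pnorm g ≤ Real.sqrt (Fintype.card ι) * C := by
  rw [pnorm, ← Real.sqrt_sq hC, ← Real.sqrt_mul (by positivity)]
  apply Real.sqrt_le_sqrt
  calc ∑ i, ‖g i‖^2 ≤ ∑ _i : ι, C^2 := by
        apply Finset.sum_le_sum
        intro i _
        exact pow_le_pow_left₀ (norm_nonneg _) (h i) 2
    _ = (Fintype.card ι) * C^2 := by simp [Finset.sum_const, nsmul_eq_mul]

lemma lipschitzOnWith_sup' {E : Type*} [PseudoEMetricSpace E] {K : NNReal} {s : Set E}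
    {ι : Type*} (A : Finset ι) (hA : A.Nonempty) (g : ι → E → ℝ)
    (h : ∀ i ∈ A, LipschitzOnWith K (g i) s) :
    LipschitzOnWith K (fun z => A.sup' hA (fun i => g i z)) s := by
  revert h
  induction hA using Finset.Nonempty.cons_induction with
  | singleton i => intro h; simpa using h i (by simp)
  | cons i A hiA hAne ih =>
      intro h
      have h1 : LipschitzOnWith K (g i) s := h i (by simp)
      have h2 : LipschitzOnWith K (fun z => A.sup' hAne (fun j => g j z)) s :=
        ih (fun j hj => h j (Finset.mem_cons_of_mem hj))
      have := (lipschitzWith_max.comp_lipschitzOnWith (h1.prodMk h2))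
      rw [one_mul, max_self] at this
      have heq : (fun z => (Finset.cons i A hiA).sup' (Finset.cons_nonempty hiA) fun j => g j z)
          = ((fun p : ℝ × ℝ => p.1 ⊔ p.2) ∘ fun x => (g i x, A.sup' hAne fun j => g j x)) := by
        funext z
        rw [Finset.sup'_cons hAne]
        rfl
      rw [heq]
      exact this

lemma continuous_finset_sup' {E : Type*} [TopologicalSpace E]
    {ι : Type*} (A : Finset ι) (hA : A.Nonempty) (g : ι → E → ℝ)
    (h : ∀ i ∈ A, Continuous (g i)) :
    Continuous (fun z => A.sup' hA (fun i => g i z)) := by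
  revert h
  induction hA using Finset.Nonempty.cons_induction with
  | singleton i => intro h; simpa using h i (by simp)
  | cons i A hiA hAne ih =>
      intro h
      have h1 : Continuous (g i) := h i (by simp)
      have h2 : Continuous (fun z => A.sup' hAne (fun j => g j z)) :=
        ih (fun j hj => h j (Finset.mem_cons_of_mem hj))
      have heq : (fun z => (Finset.cons i A hiA).sup' (Finset.cons_nonempty hiA) fun j => g j z)
          = fun z => max (g i z) (A.sup' hAne fun j => g j z) := by
        funext z
        rw [Finset.sup'_cons hAne]
      rw [heq]
      exact h1.max h2

lemma lipschitzOnWith_const_mul {E : Type*} [PseudoMetricSpace E] {K : NNReal} {s : Set E}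
    {F : E → ℝ} (hF : LipschitzOnWith K F s) {c : ℝ} (hc : 0 ≤ c) :
    LipschitzOnWith (c.toNNReal * K) (fun z => c * F z) s := by
  apply LipschitzOnWith.of_dist_le_mul
  intro x hx y hy
  have := hF.dist_le_mul x hx y hy
  rw [Real.dist_eq, ← mul_sub, abs_mul, abs_of_nonneg hc]
  rw [Real.dist_eq] at this
  calc c * |F x - F y| ≤ c * (K * dist x y) := mul_le_mul_of_nonneg_left this hc
    _ = (c.toNNReal * K : NNReal) * dist x y := by
        push_cast
        rw [Real.coe_toNNReal c hc]
        ring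

lemma lipschitzWith_proj {ι : Type*} [Fintype ι] {α β : ι → Type*}
    [∀ i, PseudoEMetricSpace (α i)] [∀ i, PseudoEMetricSpace (β i)] (i : ι) :
    LipschitzWith 1 (fun z : (∀ j, α j) × (∀ j, β j) => (z.1 i, z.2 i)) := by
  have h1 := (LipschitzWith.eval (α := α) i).comp
    (LipschitzWith.prod_fst (α := ∀ j, α j) (β := ∀ j, β j))
  have h2 := (LipschitzWith.eval (α := β) i).comp
    (LipschitzWith.prod_snd (α := ∀ j, α j) (β := ∀ j, β j))
  simpa using h1.prodMk h2

lemma lipschitzOnWith_weaken {E F : Type*} [PseudoEMetricSpace E] [PseudoEMetricSpace F]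
    {K K' : NNReal} {f : E → F} {s : Set E} (h : LipschitzOnWith K f s) (hK : K ≤ K') :
    LipschitzOnWith K' f s := by
  intro x hx y hy
  exact le_trans (h hx hy) (mul_le_mul_left (ENNReal.coe_le_coe.2 hK) _)

end Aux

set_option maxHeartbeats 2000000
/-- Remark 2, the linear case of the compositionality theorem:
with linear comparison functions `αᵢ(r) = aᵢ r`, `λᵢ(r) = λᵢ r`, `ρᵢ(r) = ρᵢ r`,
linear monotone aggregation functions `μᵢ(s) = Σ_j cᵢⱼ sⱼ`, and a linear Ω-path
`σᵢ(r) = ηᵢ r` with `η > 0` satisfying the small-gain condition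
`(1+εᵢ)·Σ_{j≠i} cᵢⱼ ηⱼ/(λⱼ aⱼ) < ηᵢ` for some `εᵢ > 0`, the function
`V(x̂,x) = maxᵢ (λᵢ/ηᵢ)·Vᵢ(x̂ᵢ,xᵢ)` is a simulation function from `I(Σ̂₁,…,Σ̂_N)` to
`I(Σ₁,…,Σ_N)` with `λ(r) = (minᵢ λᵢεᵢ/(1+εᵢ))·r` and `ρ(r) = (maxᵢ ρᵢλᵢ/ηᵢ)·r`. -/
theorem compositional_simulation_linear
    {N : ℕ} [NeZero N]
    (n nh u uh : Fin N → ℕ) (qd : Fin N → Fin N → ℕ)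
    -- concrete subsystems
    (X : ∀ i, Set (Euc (n i))) (Uset : ∀ i, Set (Euc (u i)))
    (Wblk : ∀ i : Fin N, ∀ j : {j : Fin N // j ≠ i}, Set (Euc (qd j.1 i)))
    (Yblk : ∀ i j : Fin N, Set (Euc (qd i j)))
    (f : ∀ i, Euc (n i) → Euc (u i) →
      (∀ j : {j : Fin N // j ≠ i}, Euc (qd j.1 i)) → Euc (n i))
    (hout : ∀ i j, Euc (n i) → Euc (qd i j))
    -- abstract subsystems
    (Xh : ∀ i, Set (Euc (nh i))) (Uhset : ∀ i, Set (Euc (uh i)))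
    (Whblk : ∀ i : Fin N, ∀ j : {j : Fin N // j ≠ i}, Set (Euc (qd j.1 i)))
    (Yhblk : ∀ i j : Fin N, Set (Euc (qd i j)))
    (fh : ∀ i, Euc (nh i) → Euc (uh i) →
      (∀ j : {j : Fin N // j ≠ i}, Euc (qd j.1 i)) → Euc (nh i))
    (houth : ∀ i j, Euc (nh i) → Euc (qd i j))
    -- interconnection constraints
    (hYW : ∀ i : Fin N, ∀ j : {j : Fin N // j ≠ i}, Yblk j.1 i ⊆ Wblk i j)
    (hYWh : ∀ i : Fin N, ∀ j : {j : Fin N // j ≠ i}, Yhblk j.1 i ⊆ Whblk i j)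
    (hmap : ∀ i j, ∀ x ∈ X i, hout i j x ∈ Yblk i j)
    (hmaph : ∀ i j, ∀ x ∈ Xh i, houth i j x ∈ Yhblk i j)
    -- simulation functions with linear comparison functions
    (V : ∀ i, Euc (nh i) × Euc (n i) → ℝ)
    (a lamc ρc : Fin N → ℝ)
    (μc : ∀ i : Fin N, {j : Fin N // j ≠ i} → ℝ)
    (ha : ∀ i, 0 < a i) (hlamc : ∀ i, 0 < lamc i) (hρc : ∀ i, 0 ≤ ρc i)
    (hμc : ∀ i j, 0 ≤ μc i j)
    (hVreg : ∀ i, Continuous (V i) ∧ (∀ z, 0 ≤ V i z) ∧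
      LocallyLipschitzOn {z | V i z ≠ 0} (V i))
    (hsim : ∀ i, ∀ xi ∈ X i, ∀ xhi ∈ Xh i, ∀ uhi ∈ Uhset i,
      ∀ whi : ∀ j : {j : Fin N // j ≠ i}, Euc (qd j.1 i), (∀ j, whi j ∈ Whblk i j) →
      ∃ ui ∈ Uset i, ∀ wi : ∀ j : {j : Fin N // j ≠ i}, Euc (qd j.1 i),
        (∀ j, wi j ∈ Wblk i j) →
        a i * pnorm (fun j => houth i j xhi - hout i j xi) ≤ V i (xhi, xi) ∧
        diniDeriv (V i) (xhi, xi) (fh i xhi uhi whi, f i xi ui wi) ≤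
          -(lamc i * V i (xhi, xi)) + ρc i * ‖uhi‖ +
            ∑ j : {j : Fin N // j ≠ i}, μc i j * ‖wi j - whi j‖)
    -- linear Ω-path `σᵢ(r) = ηᵢ r` and `εᵢ(r) = εᵢ r` with the small-gain condition
    (η : Fin N → ℝ) (hη : ∀ i, 0 < η i)
    (ε : Fin N → ℝ) (hε : ∀ i, 0 < ε i)
    (hΩ : ∀ i : Fin N,
      (1 + ε i) * ∑ j : {j : Fin N // j ≠ i}, μc i j * (η j.1 / (lamc j.1 * a j.1)) < η i) :
    -- conclusion
    ∃ αc : ℝ → ℝ, ClassKInf αc ∧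
      (let Vc : (∀ i, Euc (nh i)) × (∀ i, Euc (n i)) → ℝ :=
        fun z => ⨆ i, (lamc i / η i) * V i (z.1 i, z.2 i)
      Continuous Vc ∧ (∀ z, 0 ≤ Vc z) ∧ LocallyLipschitzOn {z | Vc z ≠ 0} Vc ∧
      ∀ x : ∀ i, Euc (n i), (∀ i, x i ∈ X i) →
      ∀ xh : ∀ i, Euc (nh i), (∀ i, xh i ∈ Xh i) →
      ∀ uhv : ∀ i, Euc (uh i), (∀ i, uhv i ∈ Uhset i) →
        ∃ uv : ∀ i, Euc (u i), (∀ i, uv i ∈ Uset i) ∧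
          (αc (pnorm fun i => houth i i (xh i) - hout i i (x i)) ≤ Vc (xh, x) ∧
           diniDeriv Vc (xh, x)
             (fun i => fh i (xh i) (uhv i) (fun j => houth j.1 i (xh j.1)),
              fun i => f i (x i) (uv i) (fun j => hout j.1 i (x j.1))) ≤
             -((⨅ i, lamc i * ε i / (1 + ε i)) * Vc (xh, x)) +
               (⨆ i, ρc i * lamc i / η i) * pnorm uhv)) := by
  classical
  have hNpos : 0 < N := Nat.pos_of_ne_zero (NeZero.ne N)
  haveI hne : Nonempty (Fin N) := Fin.pos_iff_nonempty.1 hNpos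
  set l : Filter ℝ := 𝓝[>] (0:ℝ) with hldef
  set g : Fin N → ((∀ i, Euc (nh i)) × (∀ i, Euc (n i))) → ℝ :=
    fun i z => (lamc i / η i) * V i (z.1 i, z.2 i) with hgdef
  set Vc : ((∀ i, Euc (nh i)) × (∀ i, Euc (n i))) → ℝ := fun z => ⨆ i, g i z with hVcdef
  have hc : ∀ i, 0 < lamc i / η i := fun i => div_pos (hlamc i) (hη i)
  have hgnn : ∀ i z, 0 ≤ g i z := fun i z => mul_nonneg (hc i).le ((hVreg i).2.1 _)
  have attain : ∀ z, ∃ i, Vc z = g i z ∧ ∀ j, g j z ≤ g i z :=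
    fun z => exists_ciSup_eq (fun j => g j z)
  have hle : ∀ i z, g i z ≤ Vc z := fun i z =>
    le_ciSup (f := fun j => g j z) (Set.Finite.bddAbove (Set.finite_range _)) i
  have hVcnn : ∀ z, 0 ≤ Vc z := by
    intro z
    obtain ⟨i, hieq, _⟩ := attain z
    rw [hieq]; exact hgnn i z
  have hgcont : ∀ i, Continuous (g i) := by
    intro i
    apply Continuous.mul continuous_const
    exact (hVreg i).1.comp
      (((continuous_apply i).comp continuous_fst).prodMk ((continuous_apply i).comp continuous_snd))
  have hVccont : Continuous Vc := by
    have hVc_eq : Vc = fun z => Finset.univ.sup' Finset.univ_nonempty (fun i => g i z) := by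
      funext z
      exact (Finset.sup'_univ_eq_ciSup _).symm
    rw [hVc_eq]
    exact continuous_finset_sup' _ _ _ (fun i _ => hgcont i)
  -- local Lipschitz data for V i near points where it is nonzero
  have hlipV : ∀ i (pt : Euc (nh i) × Euc (n i)), V i pt ≠ 0 →
      ∃ K : NNReal, ∃ s ∈ 𝓝 pt, LipschitzOnWith K (V i) s := by
    intro i pt hpt
    obtain ⟨K, s, hs, hlip⟩ := (hVreg i).2.2 hpt
    have hopen : IsOpen {z : Euc (nh i) × Euc (n i) | V i z ≠ 0} := by
      have heq : {z : Euc (nh i) × Euc (n i) | V i z ≠ 0} = (V i) ⁻¹' {y | y ≠ 0} := rfl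
      rw [heq]
      exact IsOpen.preimage (hVreg i).1 isOpen_ne
    rw [hopen.nhdsWithin_eq hpt] at hs
    exact ⟨K, s, hs, hlip⟩
  -- Vc is locally Lipschitz on its nonzero set
  have hVclip : LocallyLipschitzOn {z | Vc z ≠ 0} Vc := by
    intro z₀ hz₀
    have hpos : 0 < Vc z₀ := lt_of_le_of_ne (hVcnn z₀) (Ne.symm hz₀)
    obtain ⟨i₀, hi₀eq, hi₀max⟩ := attain z₀
    set A : Finset (Fin N) := Finset.univ.filter (fun i => Vc z₀ / 2 < g i z₀) with hAdef
    have hi₀A : i₀ ∈ A := by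
      rw [hAdef, Finset.mem_filter]
      refine ⟨Finset.mem_univ _, ?_⟩
      rw [← hi₀eq]; linarith
    have hA : A.Nonempty := ⟨i₀, hi₀A⟩
    -- Lipschitz data for each i ∈ A
    have hGlip : ∀ i : Fin N, ∃ (K : NNReal) (W : Set ((∀ j, Euc (nh j)) × (∀ j, Euc (n j)))),
        W ∈ 𝓝 z₀ ∧ (i ∈ A → LipschitzOnWith K (g i) W) := by
      intro i
      by_cases hiA : i ∈ A
      · have hgi : 0 < g i z₀ := by
          rw [hAdef, Finset.mem_filter] at hiA
          linarith [hiA.2]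
        have hVine : V i (z₀.1 i, z₀.2 i) ≠ 0 := by
          intro h0
          rw [hgdef] at hgi
          simp only [h0, mul_zero] at hgi
          exact lt_irrefl 0 hgi
        obtain ⟨K, s, hs, hlip⟩ := hlipV i (z₀.1 i, z₀.2 i) hVine
        refine ⟨(lamc i / η i).toNNReal * (K * 1),
          (fun z : (∀ j, Euc (nh j)) × (∀ j, Euc (n j)) => (z.1 i, z.2 i)) ⁻¹' s, ?_, ?_⟩
        · exact ContinuousAt.preimage_mem_nhds
            (((continuous_apply i).comp continuous_fst).prodMk
              ((continuous_apply i).comp continuous_snd)).continuousAt hs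
        · intro _
          have hproj : LipschitzWith 1
              (fun z : (∀ j, Euc (nh j)) × (∀ j, Euc (n j)) => (z.1 i, z.2 i)) :=
            lipschitzWith_proj (α := fun j => Euc (nh j)) (β := fun j => Euc (n j)) i
          have hprojOn : LipschitzOnWith 1
              (fun z : (∀ j, Euc (nh j)) × (∀ j, Euc (n j)) => (z.1 i, z.2 i))
              ((fun z : (∀ j, Euc (nh j)) × (∀ j, Euc (n j)) => (z.1 i, z.2 i)) ⁻¹' s) :=
            hproj.lipschitzOnWith
          have hcomp : LipschitzOnWith (K * 1)
              ((V i) ∘ (fun z : (∀ j, Euc (nh j)) × (∀ j, Euc (n j)) => (z.1 i, z.2 i)))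
              ((fun z : (∀ j, Euc (nh j)) × (∀ j, Euc (n j)) => (z.1 i, z.2 i)) ⁻¹' s) :=
            hlip.comp hprojOn (fun z hz => hz)
          exact lipschitzOnWith_const_mul hcomp (hc i).le
      · exact ⟨1, Set.univ, Filter.univ_mem, fun h => absurd h hiA⟩
    choose Klip Wlip hWmem hWlip using hGlip
    set Kmax : NNReal := Finset.univ.sup Klip with hKmax
    set Wall : Set ((∀ j, Euc (nh j)) × (∀ j, Euc (n j))) := ⋂ i, Wlip i with hWall
    have hWallmem : Wall ∈ 𝓝 z₀ := by
      rw [hWall]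
      exact Filter.iInter_mem.2 hWmem
    have hUev : ∀ᶠ z in 𝓝 z₀, ∀ i, |g i z - g i z₀| < Vc z₀ / 4 := by
      rw [eventually_all]
      intro i
      have htd : Filter.Tendsto (fun z => |g i z - g i z₀|) (𝓝 z₀) (𝓝 0) := by
        have h0 : Filter.Tendsto (fun z => |g i z - g i z₀|) (𝓝 z₀) (𝓝 |g i z₀ - g i z₀|) :=
          (((hgcont i).sub (continuous_const (y := g i z₀))).abs).tendsto z₀
        simpa using h0
      exact htd.eventually_lt_const (by linarith)
    set U : Set ((∀ j, Euc (nh j)) × (∀ j, Euc (n j))) :=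
      {z | ∀ i, |g i z - g i z₀| < Vc z₀ / 4} with hUdef
    have hUmem : U ∈ 𝓝 z₀ := hUev
    have hTmem : U ∩ Wall ∈ 𝓝 z₀ := Filter.inter_mem hUmem hWallmem
    have hEqOn : ∀ z ∈ U ∩ Wall, Vc z = A.sup' hA (fun i => g i z) := by
      intro z hz
      have hzU : z ∈ U := hz.1
      apply le_antisymm
      · obtain ⟨j, hjeq, hjmax⟩ := attain z
        by_cases hj : j ∈ A
        · rw [hjeq]
          exact Finset.le_sup' (fun i => g i z) hj
        · exfalso
          have hjle : g j z₀ ≤ Vc z₀ / 2 := by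
            rw [hAdef, Finset.mem_filter] at hj
            push_neg at hj
            exact hj (Finset.mem_univ _)
          have h1 := hzU j
          have h2 := hzU i₀
          have h3 : g i₀ z ≤ g j z := hjmax i₀
          rw [abs_lt] at h1 h2
          have : g i₀ z₀ = Vc z₀ := hi₀eq.symm
          linarith [h1.2, h2.1]
      · apply Finset.sup'_le
        intro i _
        exact hle i z
    have hlipsup : LipschitzOnWith Kmax (fun z => A.sup' hA (fun i => g i z)) Wall := by
      apply lipschitzOnWith_sup' A hA
      intro i hi
      exact lipschitzOnWith_weaken ((hWlip i hi).mono (Set.iInter_subset Wlip i))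
        (Finset.le_sup (Finset.mem_univ i))
    refine ⟨Kmax, U ∩ Wall, nhdsWithin_le_nhds hTmem, ?_⟩
    intro p hp p' hp'
    rw [hEqOn p hp, hEqOn p' hp']
    exact (hlipsup.mono (Set.inter_subset_right (s := U))) hp hp'
  -- the class K∞ function
  set Kα : ℝ := ⨆ i, η i / (lamc i * a i) with hKαdef
  have hKαge : ∀ i, η i / (lamc i * a i) ≤ Kα := fun i =>
    le_ciSup (f := fun j => η j / (lamc j * a j)) (Set.Finite.bddAbove (Set.finite_range _)) i
  have hKαpos : 0 < Kα := by
    obtain ⟨i⟩ := hne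
    calc (0:ℝ) < η i / (lamc i * a i) := div_pos (hη i) (mul_pos (hlamc i) (ha i))
      _ ≤ Kα := hKαge i
  have hsN : 0 < Real.sqrt N := Real.sqrt_pos.2 (by exact_mod_cast hNpos)
  set cα : ℝ := (Real.sqrt N * Kα)⁻¹ with hcαdef
  have hcαpos : 0 < cα := by positivity
  refine ⟨fun r => cα * r, ⟨⟨?_, ?_, ?_, ?_⟩, ?_⟩, ?_⟩
  · exact (continuous_const.mul continuous_id).continuousOn
  · intro p _ q _ hpq
    exact mul_lt_mul_of_pos_left hpq hcαpos
  · exact mul_zero cα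
  · intro r hr
    exact mul_nonneg hcαpos.le hr
  · intro M
    refine ⟨max 0 (M / cα), le_max_left _ _, ?_⟩
    calc M = cα * (M / cα) := by field_simp
      _ ≤ cα * max 0 (M / cα) := by
          exact mul_le_mul_of_nonneg_left (le_max_right _ _) hcαpos.le
  refine ⟨hVccont, hVcnn, hVclip, ?_⟩
  intro x hx xh hxh uhv huh
  have hchoice : ∀ i, ∃ ui ∈ Uset i,
      ∀ wi : ∀ j : {j : Fin N // j ≠ i}, Euc (qd j.1 i), (∀ j, wi j ∈ Wblk i j) →
        a i * pnorm (fun j => houth i j (xh i) - hout i j (x i)) ≤ V i (xh i, x i) ∧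
        diniDeriv (V i) (xh i, x i)
            (fh i (xh i) (uhv i) (fun j => houth j.1 i (xh j.1)), f i (x i) ui wi) ≤
          -(lamc i * V i (xh i, x i)) + ρc i * ‖uhv i‖ +
            ∑ j : {j : Fin N // j ≠ i}, μc i j * ‖wi j - (fun j : {j : Fin N // j ≠ i} => houth j.1 i (xh j.1)) j‖ :=
    fun i => hsim i (x i) (hx i) (xh i) (hxh i) (uhv i) (huh i)
      (fun j => houth j.1 i (xh j.1)) (fun j => hYWh i j (hmaph j.1 i (xh j.1) (hxh j.1)))
  choose uv huv hprop using hchoice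
  have hP := fun i => hprop i (fun j => hout j.1 i (x j.1))
      (fun j => hYW i j (hmap j.1 i (x j.1) (hx j.1)))
  have hP1 : ∀ i, a i * pnorm (fun j => houth i j (xh i) - hout i j (x i)) ≤ V i (xh i, x i) :=
    fun i => (hP i).1
  have hVblk : ∀ j, V j (xh j, x j) ≤ η j / lamc j * Vc (xh, x) := by
    intro j
    have h : (lamc j / η j) * V j (xh j, x j) ≤ Vc (xh, x) := hle j (xh, x)
    have hrw : V j (xh j, x j) = (η j / lamc j) * ((lamc j / η j) * V j (xh j, x j)) := by
      have hone : (η j / lamc j) * (lamc j / η j) = 1 := by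
        have e1 : η j ≠ 0 := (hη j).ne'
        have e2 : lamc j ≠ 0 := (hlamc j).ne'
        field_simp
      rw [← mul_assoc, hone, one_mul]
    rw [hrw]
    exact mul_le_mul_of_nonneg_left h (div_nonneg (hη j).le (hlamc j).le)
  have hblk : ∀ (j k : Fin N), ‖houth j k (xh j) - hout j k (x j)‖
      ≤ η j / (lamc j * a j) * Vc (xh, x) := by
    intro j k
    have h1 : ‖houth j k (xh j) - hout j k (x j)‖
        ≤ pnorm (fun k => houth j k (xh j) - hout j k (x j)) :=
      norm_le_pnorm (d := fun k => qd j k) (fun k => houth j k (xh j) - hout j k (x j)) k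
    have h2 := hP1 j
    have h3 := hVblk j
    have h4 : pnorm (fun k => houth j k (xh j) - hout j k (x j)) ≤ V j (xh j, x j) / a j := by
      rw [le_div_iff₀ (ha j)]
      linarith
    have h5 : V j (xh j, x j) / a j ≤ (η j / lamc j * Vc (xh, x)) / a j :=
      (div_le_div_iff_of_pos_right (ha j)).2 h3
    have h6 : (η j / lamc j * Vc (xh, x)) / a j = η j / (lamc j * a j) * Vc (xh, x) := by
      rw [← div_div]
      ring
    linarith
  refine ⟨uv, huv, ?_, ?_⟩
  · -- the class K∞ lower bound
    have hD : ∀ i, ‖houth i i (xh i) - hout i i (x i)‖ ≤ Kα * Vc (xh, x) := by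
      intro i
      refine le_trans (hblk i i) ?_
      exact mul_le_mul_of_nonneg_right (hKαge i) (hVcnn _)
    have hp : pnorm (fun i => houth i i (xh i) - hout i i (x i))
        ≤ Real.sqrt (Fintype.card (Fin N)) * (Kα * Vc (xh, x)) :=
      pnorm_le_of_norm_le (d := fun i => qd i i) (fun i => houth i i (xh i) - hout i i (x i))
        (mul_nonneg hKαpos.le (hVcnn _)) hD
    rw [Fintype.card_fin] at hp
    show cα * pnorm (fun i => houth i i (xh i) - hout i i (x i)) ≤ Vc (xh, x)
    have hsne : Real.sqrt N ≠ 0 := hsN.ne'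
    have hKne : Kα ≠ 0 := hKαpos.ne'
    calc cα * pnorm (fun i => houth i i (xh i) - hout i i (x i))
        ≤ cα * (Real.sqrt N * (Kα * Vc (xh, x))) := mul_le_mul_of_nonneg_left hp hcαpos.le
      _ = Vc (xh, x) := by
          rw [hcαdef]
          field_simp
  · -- the Dini derivative decay estimate
    set z₀ := ((xh, x) : (∀ i, Euc (nh i)) × (∀ i, Euc (n i))) with hz₀def
    set v : (∀ i, Euc (nh i)) × (∀ i, Euc (n i)) :=
      (fun i => fh i (xh i) (uhv i) (fun j => houth j.1 i (xh j.1)),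
       fun i => f i (x i) (uv i) (fun j => hout j.1 i (x j.1))) with hvdef
    haveI hlneBot : Filter.NeBot l := by rw [hldef]; infer_instance
    have hIoi : ∀ᶠ t in l, t ∈ Set.Ioi (0:ℝ) := by rw [hldef]; exact self_mem_nhdsWithin
    set qt : Fin N → ℝ → ℝ :=
      fun i t => (V i ((xh i, x i) + t • (v.1 i, v.2 i)) - V i (xh i, x i))/t with hqtdef
    have hqt_rel : ∀ (i : Fin N) (t : ℝ),
        (g i (z₀ + t • v) - g i z₀)/t = (lamc i / η i) * qt i t := by
      intro i t
      show ((lamc i / η i) * V i ((xh i, x i) + t • (v.1 i, v.2 i))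
          - (lamc i / η i) * V i (xh i, x i))/t
        = (lamc i / η i) * ((V i ((xh i, x i) + t • (v.1 i, v.2 i)) - V i (xh i, x i))/t)
      ring
    -- the per-subsystem dissipation bound, after the small-gain estimate
    set bound : Fin N → ℝ := fun i =>
      -(lamc i * V i (xh i, x i)) + ρc i * ‖uhv i‖ + η i / (1 + ε i) * Vc z₀ with hbounddef
    have hmu : ∀ i, (∑ j : {j : Fin N // j ≠ i},
          μc i j * ‖hout j.1 i (x j.1) - houth j.1 i (xh j.1)‖) ≤ η i / (1 + ε i) * Vc z₀ := by
      intro i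
      have h1ε : (0:ℝ) < 1 + ε i := by linarith [hε i]
      have hsum : (∑ j : {j : Fin N // j ≠ i},
            μc i j * ‖hout j.1 i (x j.1) - houth j.1 i (xh j.1)‖)
          ≤ ∑ j : {j : Fin N // j ≠ i}, μc i j * (η j.1 / (lamc j.1 * a j.1)) * Vc z₀ := by
        apply Finset.sum_le_sum
        intro j _
        rw [mul_assoc]
        refine mul_le_mul_of_nonneg_left ?_ (hμc i j)
        rw [norm_sub_rev]
        exact hblk j.1 i
      have hcoef : (∑ j : {j : Fin N // j ≠ i}, μc i j * (η j.1 / (lamc j.1 * a j.1)))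
          ≤ η i / (1 + ε i) := by
        rw [le_div_iff₀ h1ε, mul_comm]
        exact (hΩ i).le
      calc (∑ j : {j : Fin N // j ≠ i}, μc i j * ‖hout j.1 i (x j.1) - houth j.1 i (xh j.1)‖)
          ≤ ∑ j : {j : Fin N // j ≠ i}, μc i j * (η j.1 / (lamc j.1 * a j.1)) * Vc z₀ := hsum
        _ = (∑ j : {j : Fin N // j ≠ i}, μc i j * (η j.1 / (lamc j.1 * a j.1))) * Vc z₀ :=
            (Finset.sum_mul _ _ _).symm
        _ ≤ η i / (1 + ε i) * Vc z₀ := mul_le_mul_of_nonneg_right hcoef (hVcnn _)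
    have hDleDini : ∀ i, Filter.limsup (qt i) l ≤ bound i := by
      intro i
      have hP2 : diniDeriv (V i) (xh i, x i) (v.1 i, v.2 i)
          ≤ -(lamc i * V i (xh i, x i)) + ρc i * ‖uhv i‖ +
            ∑ j : {j : Fin N // j ≠ i},
              μc i j * ‖hout j.1 i (x j.1) - houth j.1 i (xh j.1)‖ := (hP i).2
      have hlim : Filter.limsup (qt i) l = diniDeriv (V i) (xh i, x i) (v.1 i, v.2 i) := rfl
      rw [hlim, hbounddef]
      have := hmu i
      linarith
    -- the contribution of each active subsystem is below the claimed decay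
    have hbT : ∀ i, g i z₀ = Vc z₀ →
        (lamc i / η i) * bound i
          ≤ -((⨅ j, lamc j * ε j / (1 + ε j)) * Vc z₀) +
              (⨆ j, ρc j * lamc j / η j) * pnorm uhv := by
      intro i hi
      have hVi : (lamc i / η i) * V i (xh i, x i) = Vc z₀ := hi
      have hη' : η i ≠ 0 := (hη i).ne'
      have h1ε : (0:ℝ) < 1 + ε i := by linarith [hε i]
      have heq : (lamc i / η i) * bound i
          = -(lamc i * ε i / (1 + ε i) * Vc z₀) + ρc i * lamc i / η i * ‖uhv i‖ := by
        rw [hbounddef, ← hVi]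
        field_simp
        ring
      have h2 : (⨅ j, lamc j * ε j / (1 + ε j)) ≤ lamc i * ε i / (1 + ε i) :=
        ciInf_le (f := fun j => lamc j * ε j / (1 + ε j))
          (Set.Finite.bddBelow (Set.finite_range _)) i
      have h3 : ρc i * lamc i / η i ≤ (⨆ j, ρc j * lamc j / η j) :=
        le_ciSup (f := fun j => ρc j * lamc j / η j)
          (Set.Finite.bddAbove (Set.finite_range _)) i
      have h4 : ‖uhv i‖ ≤ pnorm uhv := norm_le_pnorm (d := uh) uhv i
      have h5 : (0:ℝ) ≤ ρc i * lamc i / η i :=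
        div_nonneg (mul_nonneg (hρc i) (hlamc i).le) (hη i).le
      rw [heq]
      have t1 : -(lamc i * ε i / (1 + ε i) * Vc z₀)
          ≤ -((⨅ j, lamc j * ε j / (1 + ε j)) * Vc z₀) :=
        neg_le_neg (mul_le_mul_of_nonneg_right h2 (hVcnn _))
      have t2 : ρc i * lamc i / η i * ‖uhv i‖ ≤ (⨆ j, ρc j * lamc j / η j) * pnorm uhv :=
        mul_le_mul h3 h4 (norm_nonneg _) (le_trans h5 h3)
      exact add_le_add t1 t2
    -- active index set
    set A : Finset (Fin N) := Finset.univ.filter (fun i => g i z₀ = Vc z₀) with hAdef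
    have hmemA : ∀ i, i ∈ A ↔ g i z₀ = Vc z₀ := by
      intro i
      rw [hAdef, Finset.mem_filter]
      simp
    obtain ⟨i₀, hi₀eq, hi₀max⟩ := attain z₀
    have hi₀A : i₀ ∈ A := (hmemA i₀).2 hi₀eq.symm
    have hA : A.Nonempty := ⟨i₀, hi₀A⟩
    -- the line through z₀ in direction v
    have hline : ∀ i : Fin N, Filter.Tendsto (fun t : ℝ => g i (z₀ + t • v)) l (𝓝 (g i z₀)) := by
      intro i
      have hcont : Continuous (fun t : ℝ => z₀ + t • v) :=
        continuous_const.add (continuous_id.smul continuous_const)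
      have h0 : Filter.Tendsto (fun t : ℝ => g i (z₀ + t • v)) (𝓝 0) (𝓝 (g i (z₀ + (0:ℝ) • v))) :=
        ((hgcont i).comp hcont).tendsto 0
      rw [hldef]
      apply Filter.Tendsto.mono_left _ nhdsWithin_le_nhds
      simpa using h0
    -- eventually the quotient of Vc is dominated by active quotients
    have hstep1 : ∀ᶠ t in l, (Vc (z₀ + t • v) - Vc z₀)/t
        ≤ A.sup' hA (fun i => (lamc i / η i) * qt i t) := by
      have hev : ∀ᶠ t in l, ∀ i, i ∉ A → g i (z₀ + t • v) < g i₀ (z₀ + t • v) := by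
        rw [eventually_all]
        intro i
        by_cases hiA : i ∈ A
        · exact Filter.Eventually.of_forall (fun t hi => absurd hiA hi)
        · have hlt : g i z₀ < Vc z₀ :=
            lt_of_le_of_ne (hle i z₀) (fun h => hiA ((hmemA i).2 h))
          have e1 : ∀ᶠ t in l, g i (z₀ + t • v) < (g i z₀ + Vc z₀)/2 :=
            (hline i).eventually_lt_const (by linarith)
          have e2 : ∀ᶠ t in l, (g i z₀ + Vc z₀)/2 < g i₀ (z₀ + t • v) :=
            (hline i₀).eventually_const_lt (by rw [← hi₀eq]; linarith)
          filter_upwards [e1, e2] with t h1 h2 _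
          linarith
      filter_upwards [hev, hIoi] with t hevt ht
      obtain ⟨j, hjeq, hjmax⟩ := attain (z₀ + t • v)
      have hjA : j ∈ A := by
        by_contra hj
        exact absurd (hjmax i₀) (not_le.2 (hevt j hj))
      have hgj : g j z₀ = Vc z₀ := (hmemA j).1 hjA
      have hqj : (Vc (z₀ + t • v) - Vc z₀)/t = (lamc j / η j) * qt j t := by
        rw [hjeq, ← hgj]
        exact hqt_rel j t
      rw [hqj]
      exact Finset.le_sup' (fun i => (lamc i / η i) * qt i t) hjA
    -- active quotients are below the quotient of Vc
    have hq_lb : ∀ i ∈ A, ∀ᶠ t in l,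
        (lamc i / η i) * qt i t ≤ (Vc (z₀ + t • v) - Vc z₀)/t := by
      intro i hiA
      have hgi : g i z₀ = Vc z₀ := (hmemA i).1 hiA
      filter_upwards [hIoi] with t ht
      rw [← hqt_rel i t, hgi]
      exact (div_le_div_iff_of_pos_right ht).2 (by have := hle i (z₀ + t • v); linarith)
    -- main bounded-case argument
    have hmain : (∀ i ∈ A, Filter.IsBoundedUnder (· ≤ ·) l (qt i)) →
        Filter.IsCoboundedUnder (· ≤ ·) l (fun t : ℝ => (Vc (z₀ + t • v) - Vc z₀)/t) →
        Filter.limsup (fun t : ℝ => (Vc (z₀ + t • v) - Vc z₀)/t) l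
          ≤ -((⨅ j, lamc j * ε j / (1 + ε j)) * Vc z₀) +
              (⨆ j, ρc j * lamc j / η j) * pnorm uhv := by
      intro hbddA hcob
      refine le_trans (limsup_le_finset_sup' A hA _
        (fun i t => (lamc i / η i) * qt i t) (fun i => (lamc i / η i) * bound i)
        hstep1 hcob ?_) ?_
      · intro i hiA ε' hε'
        have hcpos := hc i
        have hlt : Filter.limsup (qt i) l < bound i + ε' / (lamc i / η i) := by
          have hd : 0 < ε' / (lamc i / η i) := div_pos hε' hcpos
          exact lt_of_le_of_lt (hDleDini i) (lt_add_of_pos_right _ hd)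
        have hev := Filter.eventually_lt_of_limsup_lt hlt (hbddA i hiA)
        filter_upwards [hev] with t htlt
        have hq : qt i t ≤ bound i + ε' / (lamc i / η i) := le_of_lt htlt
        calc (lamc i / η i) * qt i t
            ≤ (lamc i / η i) * (bound i + ε' / (lamc i / η i)) :=
              mul_le_mul_of_nonneg_left hq hcpos.le
          _ = (lamc i / η i) * bound i + ε' := by
              rw [mul_add, mul_div_cancel₀ _ hcpos.ne']
      · exact Finset.sup'_le _ _ (fun i hiA => hbT i ((hmemA i).1 hiA))
    show Filter.limsup (fun t : ℝ => (Vc (z₀ + t • v) - Vc z₀)/t) l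
        ≤ -((⨅ j, lamc j * ε j / (1 + ε j)) * Vc z₀) +
            (⨆ j, ρc j * lamc j / η j) * pnorm uhv
    rcases eq_or_lt_of_le (hVcnn z₀) with hVc0 | hVcpos
    · -- the case Vc z₀ = 0
      have hz0 : Vc z₀ = 0 := hVc0.symm
      have hall : ∀ i, g i z₀ = Vc z₀ := fun i =>
        le_antisymm (hle i z₀) (by rw [hz0]; exact hgnn i z₀)
      have hV0 : ∀ i, V i (xh i, x i) = 0 := by
        intro i
        have h2 : (lamc i / η i) * V i (xh i, x i) = 0 := by
          have h := hall i
          rw [hz0] at h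
          exact h
        rcases mul_eq_zero.1 h2 with h3 | h3
        · exact absurd h3 (hc i).ne'
        · exact h3
      by_cases hbdd : ∀ i, Filter.IsBoundedUnder (· ≤ ·) l (qt i)
      · apply hmain (fun i _ => hbdd i)
        apply Filter.isCoboundedUnder_le_of_eventually_le l (x := 0)
        filter_upwards [hIoi] with t ht
        rw [hz0, sub_zero]
        exact div_nonneg (hVcnn _) (le_of_lt ht)
      · push_neg at hbdd
        obtain ⟨i, hibd⟩ := hbdd
        have hiA : i ∈ A := (hmemA i).2 (hall i)
        have hnb : ¬ Filter.IsBoundedUnder (· ≤ ·) l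
            (fun t : ℝ => (Vc (z₀ + t • v) - Vc z₀)/t) := by
          rintro ⟨b, hb⟩
          apply hibd
          refine ⟨(η i / lamc i) * b, ?_⟩
          rw [Filter.eventually_map] at hb ⊢
          filter_upwards [hb, hq_lb i hiA] with t h1 h2
          have h3 : (lamc i / η i) * qt i t ≤ b := le_trans h2 h1
          have hηl : (0:ℝ) ≤ η i / lamc i := div_nonneg (hη i).le (hlamc i).le
          calc qt i t = (η i / lamc i) * ((lamc i / η i) * qt i t) := by
                have hone : (η i / lamc i) * (lamc i / η i) = 1 := by
                  have e1 : η i ≠ 0 := (hη i).ne'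
                  have e2 : lamc i ≠ 0 := (hlamc i).ne'
                  field_simp
                rw [← mul_assoc, hone, one_mul]
            _ ≤ (η i / lamc i) * b := mul_le_mul_of_nonneg_left h3 hηl
        have h0 : Filter.limsup (fun t : ℝ => (Vc (z₀ + t • v) - Vc z₀)/t) l = 0 :=
          limsup_junk hnb
        rw [h0, hz0]
        have h5 : (0:ℝ) ≤ ρc i * lamc i / η i :=
          div_nonneg (mul_nonneg (hρc i) (hlamc i).le) (hη i).le
        have hSnn : (0:ℝ) ≤ ⨆ j, ρc j * lamc j / η j :=
          le_trans h5 (le_ciSup (f := fun j => ρc j * lamc j / η j)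
            (Set.Finite.bddAbove (Set.finite_range _)) i)
        have : -((⨅ j, lamc j * ε j / (1 + ε j)) * (0:ℝ)) = 0 := by ring
        rw [this, zero_add]
        exact mul_nonneg hSnn (pnorm_nonneg' _)
    · -- the case 0 < Vc z₀
      have hbddA : ∀ i ∈ A, ∃ C : ℝ, ∀ᶠ t in l, |qt i t| ≤ C := by
        intro i hiA
        have hgi : g i z₀ = Vc z₀ := (hmemA i).1 hiA
        have hVine : V i (xh i, x i) ≠ 0 := by
          intro h0
          have h2 : g i z₀ = 0 := by
            show (lamc i / η i) * V i (xh i, x i) = 0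
            rw [h0, mul_zero]
          rw [h2] at hgi
          exact absurd hgi.symm (ne_of_gt hVcpos)
        obtain ⟨K, s, hs, hlip⟩ := hlipV i (xh i, x i) hVine
        have htline : Filter.Tendsto (fun t : ℝ => (xh i, x i) + t • (v.1 i, v.2 i)) l
            (𝓝 ((xh i, x i))) := by
          have hcont : Continuous (fun t : ℝ => (xh i, x i) + t • (v.1 i, v.2 i)) :=
            continuous_const.add (continuous_id.smul continuous_const)
          have h0 := hcont.tendsto 0
          rw [hldef]
          apply Filter.Tendsto.mono_left _ nhdsWithin_le_nhds
          simpa using h0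
        refine ⟨(K : ℝ) * ‖(v.1 i, v.2 i)‖, ?_⟩
        filter_upwards [htline.eventually_mem hs, hIoi] with t hmem ht
        have hdist := hlip.dist_le_mul _ hmem _ (mem_of_mem_nhds hs)
        have hdeq : dist ((xh i, x i) + t • (v.1 i, v.2 i)) ((xh i, x i))
            = t * ‖(v.1 i, v.2 i)‖ := by
          rw [dist_eq_norm, add_sub_cancel_left, norm_smul, Real.norm_eq_abs, abs_of_pos ht]
        have habs : |V i ((xh i, x i) + t • (v.1 i, v.2 i)) - V i (xh i, x i)|
            ≤ (K:ℝ) * (t * ‖(v.1 i, v.2 i)‖) := by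
          rw [← Real.dist_eq, ← hdeq]
          exact hdist
        have hq : qt i t = (V i ((xh i, x i) + t • (v.1 i, v.2 i)) - V i (xh i, x i))/t := rfl
        rw [hq, abs_div, abs_of_pos (show (0:ℝ) < t from ht), div_le_iff₀ (show (0:ℝ) < t from ht)]
        calc |V i ((xh i, x i) + t • (v.1 i, v.2 i)) - V i (xh i, x i)|
            ≤ (K:ℝ) * (t * ‖(v.1 i, v.2 i)‖) := habs
          _ = (K:ℝ) * ‖(v.1 i, v.2 i)‖ * t := by ring
      apply hmain
      · intro i hiA
        obtain ⟨C, hC⟩ := hbddA i hiA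
        refine ⟨C, ?_⟩
        rw [Filter.eventually_map]
        filter_upwards [hC] with t h
        exact le_trans (le_abs_self _) h
      · obtain ⟨C, hC⟩ := hbddA i₀ hi₀A
        apply Filter.isCoboundedUnder_le_of_eventually_le l
          (x := -((lamc i₀ / η i₀) * C))
        filter_upwards [hC, hq_lb i₀ hi₀A] with t h1 h2
        have h3 : -C ≤ qt i₀ t := (abs_le.1 h1).1
        have h4 : (lamc i₀ / η i₀) * (-C) ≤ (lamc i₀ / η i₀) * qt i₀ t :=
          mul_le_mul_of_nonneg_left h3 (hc i₀).le
        have h5 : -((lamc i₀ / η i₀) * C) = (lamc i₀ / η i₀) * (-C) := by ring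
        linarith
end
end
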